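/- arXiv:math/0501464 — 3 statements merged into one kernel-verified Lean document; each statement's English description precedes it below -/
import Mathlib

section
/- In the (2,3,7) triangle group Δ₂₃₇ = ⟨a, b, c | a² = b³ = c⁷ = cba = 1⟩, the three elements L₁ = c^{ac}, L₂ = c^{ac⁻³}, L₃ = c^{ac⁻²} generate Δ₂₃₇. -/
/-!
Put g = a c⁻². Then L₃ = c^g, and, modulo the relations a² = (ac)³ = 1, also L₂ = (c⁻² a)^g.
Since ⟨c, c⁻² a⟩ = ⟨c, a⟩ is the whole group (b = c⁻¹ a⁻¹), conjugating back by g shows that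
already L₂ and L₃ generate Δ₂₃₇.
-/

/-- Relations of the (2,3,n) triangle-type group ⟨a,b,c | a² = b³ = cⁿ = cba = 1⟩,
with generators indexed 0 ↦ a, 1 ↦ b, 2 ↦ c. -/
def triangleRels (n : ℕ) : Set (FreeGroup (Fin 3)) :=
  {FreeGroup.of 0 ^ 2, FreeGroup.of 1 ^ 3, FreeGroup.of 2 ^ n,
    FreeGroup.of 2 * FreeGroup.of 1 * FreeGroup.of 0}

namespace Subgroup

variable {G : Type*} [Group G]

theorem closure_pair_mul_left_of_mem {x y w : G} (hw : w ∈ closure {x}) :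
    closure {x, w * y} = closure {x, y} := by
  have hx : closure {x} ≤ closure {x, y} := closure_mono (by simp)
  have hx' : closure {x} ≤ closure {x, w * y} := closure_mono (by simp)
  apply le_antisymm <;> rw [closure_le, Set.insert_subset_iff, Set.singleton_subset_iff]
  · exact ⟨subset_closure (by simp), mul_mem (hx hw) (subset_closure (by simp))⟩
  · refine ⟨subset_closure (by simp), ?_⟩
    simpa using mul_mem (inv_mem (hx' hw)) (subset_closure (by simp) : w * y ∈ closure {x, w * y})

theorem closure_image_conj_eq_top (g : G) {s : Set G} (hs : closure s = ⊤) :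
    closure ((fun x => g⁻¹ * x * g) '' s) = ⊤ := by
  have : (fun x => g⁻¹ * x * g) = (MulAut.conj g⁻¹).toMonoidHom := by ext; simp
  rw [this, ← MonoidHom.map_closure, hs, map_top_of_surjective _ (MulEquiv.surjective _)]

end Subgroup

theorem conj_mul_inv_pow_three_eq_conj_mul_inv_pow_two {G : Type*} [Group G] {a c : G}
    (ha : a ^ 2 = 1) (hac : (a * c) ^ 3 = 1) :
    (a * c⁻¹ ^ 3)⁻¹ * c * (a * c⁻¹ ^ 3) = (a * c⁻¹ ^ 2)⁻¹ * (c⁻¹ ^ 2 * a) * (a * c⁻¹ ^ 2) := by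
  rw [sq] at ha
  rw [pow_three] at hac
  -- In the free group, each side is c² a⁻¹ c⁻⁴ with a relator spliced in.
  have hl : (a * c⁻¹ ^ 3)⁻¹ * c * (a * c⁻¹ ^ 3) =
      c ^ 3 * (a * a)⁻¹ * (a * c * (a * c * (a * c))) * c⁻¹ ^ 3 * (c ^ 2 * a⁻¹ * c⁻¹ ^ 4) := by
    group
  have hr : (a * c⁻¹ ^ 2)⁻¹ * (c⁻¹ ^ 2 * a) * (a * c⁻¹ ^ 2) =
      c ^ 2 * a⁻¹ * c⁻¹ ^ 2 * (a * a) * c⁻¹ ^ 2 := by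
    group
  rw [hl, hr, ha, hac]
  group

namespace TriangleGroup

open PresentedGroup

variable {n : ℕ}

theorem of_zero_sq : (of 0 : PresentedGroup (triangleRels n)) ^ 2 = 1 :=
  one_of_mem (x := FreeGroup.of 0 ^ 2) (by simp [triangleRels])

theorem of_one_cube : (of 1 : PresentedGroup (triangleRels n)) ^ 3 = 1 :=
  one_of_mem (x := FreeGroup.of 1 ^ 3) (by simp [triangleRels])

theorem of_one_eq : (of 1 : PresentedGroup (triangleRels n)) = (of 2)⁻¹ * (of 0)⁻¹ := by
  have h : (of 2 * of 1 * of 0 : PresentedGroup (triangleRels n)) = 1 :=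
    one_of_mem (x := FreeGroup.of 2 * FreeGroup.of 1 * FreeGroup.of 0) (by simp [triangleRels])
  calc (of 1 : PresentedGroup (triangleRels n))
        = (of 2)⁻¹ * (of 2 * of 1 * of 0) * (of 0)⁻¹ := by group
    _ = (of 2)⁻¹ * (of 0)⁻¹ := by rw [h, mul_one]

theorem of_zero_mul_of_two_pow_three :
    (of 0 * of 2 : PresentedGroup (triangleRels n)) ^ 3 = 1 := by
  rw [← inv_eq_one, ← inv_pow, mul_inv_rev, ← of_one_eq, of_one_cube]

theorem closure_of_two_of_zero :
    Subgroup.closure {of 2, of 0} = (⊤ : Subgroup (PresentedGroup (triangleRels n))) := by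
  rw [eq_top_iff, ← closure_range_of, Subgroup.closure_le]
  rintro _ ⟨j, rfl⟩
  have ha : of 0 ∈ Subgroup.closure {(of 2 : PresentedGroup (triangleRels n)), of 0} :=
    Subgroup.subset_closure (by simp)
  have hc : of 2 ∈ Subgroup.closure {(of 2 : PresentedGroup (triangleRels n)), of 0} :=
    Subgroup.subset_closure (by simp)
  fin_cases j
  · exact ha
  · simpa [of_one_eq] using Subgroup.mul_mem _ (Subgroup.inv_mem _ hc) (Subgroup.inv_mem _ ha)
  · exact hc

end TriangleGroup

/-- In the (2,3,7) triangle group Δ₂₃₇ = ⟨a,b,c | a² = b³ = c⁷ = cba = 1⟩, the elements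
L₁ = c^{ac}, L₂ = c^{ac⁻³}, L₃ = c^{ac⁻²} (where x^y := y⁻¹xy) generate Δ₂₃₇. -/
theorem klein_words_generate_237 :
    let a : PresentedGroup (triangleRels 7) := PresentedGroup.of 0
    let c : PresentedGroup (triangleRels 7) := PresentedGroup.of 2
    Subgroup.closure
      {(a * c)⁻¹ * c * (a * c),
       (a * (c⁻¹) ^ 3)⁻¹ * c * (a * (c⁻¹) ^ 3),
       (a * (c⁻¹) ^ 2)⁻¹ * c * (a * (c⁻¹) ^ 2)} =
      (⊤ : Subgroup (PresentedGroup (triangleRels 7))) := by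
  intro a c
  have hgen : Subgroup.closure {c, c⁻¹ ^ 2 * a} = ⊤ := by
    rw [Subgroup.closure_pair_mul_left_of_mem
      (pow_mem (inv_mem (Subgroup.mem_closure_singleton_self c)) 2)]
    exact TriangleGroup.closure_of_two_of_zero
  rw [eq_top_iff, ← Subgroup.closure_image_conj_eq_top (a * c⁻¹ ^ 2) hgen, Set.image_pair,
    ← conj_mul_inv_pow_three_eq_conj_mul_inv_pow_two TriangleGroup.of_zero_sq
      TriangleGroup.of_zero_mul_of_two_pow_three]
  exact Subgroup.closure_mono (Set.insert_subset_iff.2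
    ⟨Or.inr (Or.inr rfl), Set.singleton_subset_iff.2 (Or.inr (Or.inl rfl))⟩)
end

section
/- The function y(t) = √t satisfies the sixth Painlevé equation with parameters α = 1/18, β = −1/18, γ = 2/9, δ = 5/18 on the domain t ∈ (0, 1). -/
/-! In terms of `s = √t` one has `y' = 1/(2s)` and `y'' = -1/(4 s³)`, and after substituting
`t = s²` the Painlevé VI right-hand side with these parameters is a rational function of `s`
that simplifies to `-1/(4 s³)` for every `s ∉ {0, 1, -1}`. -/

open Real Filter Topology

noncomputable def painleveVIRhs (α β γ δ t y y' : ℝ) : ℝ :=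
  (1 / 2) * (1 / y + 1 / (y - 1) + 1 / (y - t)) * y' ^ 2
    - (1 / t + 1 / (t - 1) + 1 / (y - t)) * y'
    + y * (y - 1) * (y - t) / (t ^ 2 * (t - 1) ^ 2) *
      (α + β * t / y ^ 2 + γ * (t - 1) / (y - 1) ^ 2 + δ * t * (t - 1) / (y - t) ^ 2)

theorem painleveVIRhs_sq_self {s : ℝ} (hs₀ : s ≠ 0) (hs₁ : s ≠ 1) (hs_neg : s ≠ -1) :
    painleveVIRhs (1 / 18) (-1 / 18) (2 / 9) (5 / 18) (s ^ 2) s (1 / (2 * s)) =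
      -1 / (4 * s ^ 3) := by
  have h₁ : s - 1 ≠ 0 := sub_ne_zero.mpr hs₁
  have h₂ : s + 1 ≠ 0 := by rwa [← sub_neg_eq_add, sub_ne_zero]
  have hst : s - s ^ 2 ≠ 0 := by
    rw [show s - s ^ 2 = -(s * (s - 1)) by ring]; exact neg_ne_zero.mpr (mul_ne_zero hs₀ h₁)
  have hs₂ : s ^ 2 - 1 ≠ 0 := by rw [show s ^ 2 - 1 = (s - 1) * (s + 1) by ring]; positivity
  unfold painleveVIRhs
  field_simp
  ring

theorem deriv_sqrt_eventuallyEq {t : ℝ} (ht : t ≠ 0) :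
    deriv (√·) =ᶠ[𝓝 t] fun x => 1 / (2 * √x) := by
  filter_upwards [eventually_ne_nhds ht] with x hx
  exact (hasDerivAt_sqrt hx).deriv

theorem deriv_deriv_sqrt {t : ℝ} (ht : 0 < t) : deriv (deriv (√·)) t = -1 / (4 * √t ^ 3) := by
  have hs : √t ≠ 0 := sqrt_ne_zero'.mpr ht
  rw [(deriv_sqrt_eventuallyEq ht.ne').deriv_eq]
  have h : HasDerivAt (fun x => (2 * √x)⁻¹) (-(2 * (1 / (2 * √t))) / (2 * √t) ^ 2) t :=
    ((hasDerivAt_sqrt ht.ne').const_mul 2).inv (mul_ne_zero two_ne_zero hs)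
  simp only [one_div]
  rw [h.deriv]
  field_simp
  ring

/-- y(t) = √t solves Painlevé VI with parameters α = 1/18, β = −1/18, γ = 2/9,
δ = 5/18 on (0,1). -/
theorem sqrt_solves_PVI :
    ∀ t ∈ Set.Ioo (0 : ℝ) 1,
      let y : ℝ → ℝ := fun t => Real.sqrt t
      deriv (deriv y) t =
        (1 / 2) * (1 / y t + 1 / (y t - 1) + 1 / (y t - t)) * (deriv y t) ^ 2
          - (1 / t + 1 / (t - 1) + 1 / (y t - t)) * deriv y t
          + y t * (y t - 1) * (y t - t) / (t ^ 2 * (t - 1) ^ 2) *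
            ((1 / 18) + (-1 / 18) * t / (y t) ^ 2 + (2 / 9) * (t - 1) / (y t - 1) ^ 2
              + (5 / 18) * t * (t - 1) / (y t - t) ^ 2) := by
  rintro t ⟨ht₀, ht₁⟩ y
  have hs₀ : √t ≠ 0 := sqrt_ne_zero'.mpr ht₀
  have hs₁ : √t ≠ 1 := fun h => ht₁.ne (sqrt_eq_one.mp h)
  have hs_neg : √t ≠ -1 := by linarith [sqrt_nonneg t]
  have hrhs := painleveVIRhs_sq_self hs₀ hs₁ hs_neg
  rw [sq_sqrt ht₀.le] at hrhs
  change deriv (deriv (√·)) t = painleveVIRhs _ _ _ _ t (√t) (deriv (√·) t)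
  rw [deriv_deriv_sqrt ht₀, (hasDerivAt_sqrt ht₀.ne').deriv, hrhs]
end

section
/- In the (2,3,8) triangle group Δ₂₃₈ = ⟨a, b, c | a² = b³ = c⁸ = cba = 1⟩, the elements L₁ = c^{a} and L₃ = c^{ac⁻¹} generate Δ₂₃₈. -/
lemma rel_one_238 (r : FreeGroup (Fin 3)) (hr : r ∈ triangleRels 8) :
    PresentedGroup.mk (triangleRels 8) r = 1 :=
  (QuotientGroup.eq_one_iff r).2 (Subgroup.subset_normalClosure hr)

/-- In the (2,3,8) triangle group Δ₂₃₈ = ⟨a,b,c | a² = b³ = c⁸ = cba = 1⟩, the elements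
L₁ = c^{a} = a⁻¹ca and L₃ = c^{ac⁻¹} = (ac⁻¹)⁻¹c(ac⁻¹) generate Δ₂₃₈. -/
theorem words_generate_238 :
    let a : PresentedGroup (triangleRels 8) := PresentedGroup.of 0
    let c : PresentedGroup (triangleRels 8) := PresentedGroup.of 2
    Subgroup.closure {a⁻¹ * c * a, (a * c⁻¹)⁻¹ * c * (a * c⁻¹)} =
      (⊤ : Subgroup (PresentedGroup (triangleRels 8))) := by
  intro a c
  set b : PresentedGroup (triangleRels 8) := PresentedGroup.of 1 with hb
  have ha2 : a ^ 2 = 1 := by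
    have := rel_one_238 _ (Or.inl rfl)
    simpa [a, PresentedGroup.of] using this
  have hb3 : b ^ 3 = 1 := by
    have := rel_one_238 _ (Or.inr (Or.inl rfl))
    simpa [b, PresentedGroup.of] using this
  have hcba : c * b * a = 1 := by
    have := rel_one_238 _ (Or.inr (Or.inr (Or.inr rfl)))
    simpa [a, b, c, PresentedGroup.of] using this
  have hA : a * a = 1 := by rw [← pow_two]; exact ha2
  have hAA : ∀ x : PresentedGroup (triangleRels 8), a * (a * x) = x := by
    intro x; rw [← mul_assoc, hA, one_mul]
  -- a is its own inverse
  have hai : a⁻¹ = a := by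
    rw [← mul_one a⁻¹, ← hA, ← mul_assoc, inv_mul_cancel, one_mul]
  -- b = c⁻¹ * a⁻¹
  have hbeq : b = c⁻¹ * a⁻¹ := by
    have : c * b = a⁻¹ := by
      rw [← one_mul a⁻¹, ← hcba, mul_assoc, mul_inv_cancel, mul_one]
    rw [← this]; group
  -- (a*c)^3 = 1
  have hac3 : a * c * (a * c) * (a * c) = 1 := by
    have h : (b⁻¹) ^ 3 = 1 := by rw [inv_pow, hb3, inv_one]
    have hbi : b⁻¹ = a * c := by rw [hbeq]; group
    rw [hbi, pow_succ, pow_succ, pow_one] at h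
    exact h
  -- key identity: a*c*a*c = c⁻¹ * a
  have hkey : a * c * a * c = c⁻¹ * a := by
    have h2 : a * c * (a * c) * (a * c) * (a * c)⁻¹ = 1 * (a * c)⁻¹ := by rw [hac3]
    rw [mul_inv_cancel_right, one_mul, mul_inv_rev, hai] at h2
    calc a * c * a * c = a * c * (a * c) := by group
      _ = c⁻¹ * a := h2
  -- variant: c*a*c = a*c⁻¹*a
  have hkey2 : c * a * c = a * c⁻¹ * a := by
    have h3 := congrArg (a * ·) hkey
    calc c * a * c = a * (a * (c * a * c)) := by rw [hAA]
      _ = a * (a * c * a * c) := by group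
      _ = a * (c⁻¹ * a) := by rw [h3]
      _ = a * c⁻¹ * a := by group
  have hinv : (a * c⁻¹)⁻¹ = c * a := by rw [mul_inv_rev, inv_inv, hai]
  set L₁ : PresentedGroup (triangleRels 8) := a⁻¹ * c * a with hL1
  set L₃ : PresentedGroup (triangleRels 8) := (a * c⁻¹)⁻¹ * c * (a * c⁻¹) with hL3
  -- a = L₁ * L₁ * L₃
  have haL : L₁ * L₁ * L₃ = a := by
    rw [hL1, hL3, hai, hinv, hkey2]
    simp only [mul_assoc, hAA]
    group
  have hcL : (L₁ * L₁ * L₃) * L₁ * (L₁ * L₁ * L₃) = c := by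
    rw [haL, hL1, hai]
    simp only [mul_assoc, hAA, hA, mul_one]
  rw [eq_top_iff, ← PresentedGroup.closure_range_of (triangleRels 8), Subgroup.closure_le]
  rintro x ⟨i, rfl⟩
  have hmem1 : L₁ ∈ Subgroup.closure {L₁, L₃} :=
    Subgroup.subset_closure (Or.inl rfl)
  have hmem3 : L₃ ∈ Subgroup.closure {L₁, L₃} :=
    Subgroup.subset_closure (Or.inr rfl)
  have hamem : a ∈ Subgroup.closure {L₁, L₃} := by
    rw [← haL]; exact mul_mem (mul_mem hmem1 hmem1) hmem3
  have hcmem : c ∈ Subgroup.closure {L₁, L₃} := by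
    rw [← hcL]; exact mul_mem (mul_mem (mul_mem (mul_mem hmem1 hmem1) hmem3) hmem1)
      (mul_mem (mul_mem hmem1 hmem1) hmem3)
  have hbmem : b ∈ Subgroup.closure {L₁, L₃} := by
    rw [hbeq]; exact mul_mem (inv_mem hcmem) (inv_mem hamem)
  fin_cases i
  · exact hamem
  · exact hbmem
  · exact hcmem
end
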